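/- arXiv:1209.4398 — 6 statements merged into one kernel-verified Lean document; each statement's English description precedes it below -/
import Mathlib

section
/- Let Γ = (C, X, H, I, η, E) be an admissible Galois structure. Then the reflector I : C → X preserves every pullback square in which one of the two legs being pulled back is a trivial covering. -/
open CategoryTheory CategoryTheory.Limits

universe v u v' u'

namespace GaloisPaper

variable {C : Type u} [Category.{v} C]

/-- The class `E¹` of "double extensions" relative to a class `F` of morphisms:
a commutative square (i.e. a morphism `σ : a ⟶ b` of the arrow category) with all
four arrows in `F`, such that the comparison morphism to the pullback lies in `F`. -/
def InE1 (F : MorphismProperty C) : MorphismProperty (Arrow C) := fun a b σ =>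
  F a.hom ∧ F b.hom ∧ F σ.left ∧ F σ.right ∧
    ∃ (P : C) (p₁ : P ⟶ a.right) (p₂ : P ⟶ b.left) (l : a.left ⟶ P),
      IsPullback p₁ p₂ σ.right b.hom ∧ l ≫ p₁ = a.hom ∧ l ≫ p₂ = σ.left ∧ F l

/-- (E1): `F` contains all isomorphisms (between objects satisfying `O`). -/
def CondE1 (O : C → Prop) (F : MorphismProperty C) : Prop :=
  ∀ ⦃a b : C⦄ (σ : a ⟶ b), O a → O b → IsIso σ → F σ

/-- (E2): `F` is pullback-stable: pullbacks of morphisms of `F` along arbitrary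
morphisms (between objects satisfying `O`) exist and lie in `F`. -/
def CondE2 (O : C → Prop) (F : MorphismProperty C) : Prop :=
  ∀ ⦃a b : C⦄ (σ : a ⟶ b), F σ → ∀ ⦃c : C⦄ (g : c ⟶ b), O c →
    (∃ (d : C) (q₁ : d ⟶ a) (q₂ : d ⟶ c), O d ∧ IsPullback q₁ q₂ σ g ∧ F q₂) ∧
    (∀ ⦃d : C⦄ (q₁ : d ⟶ a) (q₂ : d ⟶ c), O d → IsPullback q₁ q₂ σ g → F q₂)

/-- (E3): `F` is closed under composition. -/
def CondE3 (F : MorphismProperty C) : Prop :=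
  ∀ ⦃a b c : C⦄ (σ : a ⟶ b) (τ : b ⟶ c), F σ → F τ → F (σ ≫ τ)

/-- (E4): if `σ ≫ τ ∈ F` then `τ ∈ F`. -/
def CondE4 (O : C → Prop) (F : MorphismProperty C) : Prop :=
  ∀ ⦃a b c : C⦄ (σ : a ⟶ b) (τ : b ⟶ c), O a → O b → O c → F (σ ≫ τ) → F τ

/-- (E5): every split epimorphism of `Ext(C)` (i.e. every morphism of the arrow
category between `F`-arrows admitting a section) lies in `F¹`. -/
def CondE5 (F : MorphismProperty C) : Prop :=
  ∀ ⦃a b : Arrow C⦄ (σ : a ⟶ b) (τ : b ⟶ a), τ ≫ σ = 𝟙 b → F a.hom → F b.hom → InE1 F σ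

/-- `(C ↓ B)`: the full subcategory of `Over B` on morphisms in `F`. -/
def EOver (F : MorphismProperty C) (B : C) :=
  ObjectProperty.FullSubcategory (fun f : Over B => F f.hom)

instance (F : MorphismProperty C) (B : C) : Category (EOver F B) :=
  ObjectProperty.FullSubcategory.category _

/-- `Σ_p`: composition with `p`, as a functor `(C ↓ A) ⥤ (C ↓ B)`. -/
def eMap (F : MorphismProperty C) {A B : C} (p : A ⟶ B)
    (hcomp : ∀ ⦃Z : C⦄ (f : Z ⟶ A), F f → F (f ≫ p)) : EOver F A ⥤ EOver F B :=
  ObjectProperty.lift _ (ObjectProperty.ι _ ⋙ Over.map p)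
    (fun f => hcomp f.obj.hom f.property)

/-- `p` is a monadic extension (effective `F`-descent morphism): `p ∈ F` and the
pullback functor `p* : (C ↓ B) ⥤ (C ↓ A)` (i.e. the right adjoint of `Σ_p`) is monadic. -/
def IsMonadicExt (F : MorphismProperty C) {A B : C} (p : A ⟶ B) : Prop :=
  F p ∧ ∃ (hcomp : ∀ ⦃Z : C⦄ (f : Z ⟶ A), F f → F (f ≫ p))
    (G : EOver F B ⥤ EOver F A) (_ : eMap F p hcomp ⊣ G),
    Nonempty (MonadicRightAdjoint G)

/-- `u : e ⟶ r` exhibits `r` as a reflection of `e` into the full subcategory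
determined by `P`. -/
def IsReflectionInto {D : Type u'} [Category.{v'} D] (P : D → Prop) {e r : D}
    (u : e ⟶ r) : Prop :=
  P r ∧ ∀ ⦃a : D⦄, P a → ∀ k : e ⟶ a, ∃! m : r ⟶ a, u ≫ m = k

/-- A Galois structure `(C, X, H, I, η, E)` as in Janelidze–Kelly: a full replete
reflective subcategory together with a class `E` satisfying (E1)–(E3) and (G). -/
structure GaloisStructure (C : Type u) [Category.{v} C] (X : Type u') [Category.{v'} X] where
  H : X ⥤ C
  I : C ⥤ X
  adj : I ⊣ H
  hFull : H.Full
  hFaithful : H.Faithful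
  E : MorphismProperty C
  hE1 : CondE1 (fun _ => True) E
  hE2 : CondE2 (fun _ => True) E
  hE3 : CondE3 E
  hG : ∀ ⦃A B : C⦄ (f : A ⟶ B), E f → E (H.map (I.map f))

namespace GaloisStructure

variable {X : Type u'} [Category.{v'} X] (Γ : GaloisStructure C X)

/-- The component `η_A : A ⟶ HI(A)` of the reflection unit. -/
def unitApp (A : C) : A ⟶ Γ.H.obj (Γ.I.obj A) := Γ.adj.unit.app A

/-- A trivial covering: `f ∈ E` whose `η`-naturality square is a pullback. -/
def TrivCov {A B : C} (f : A ⟶ B) : Prop :=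
  Γ.E f ∧ IsPullback (Γ.unitApp A) f (Γ.H.map (Γ.I.map f)) (Γ.unitApp B)

/-- `f` is split by `p`: the pullback `p*(f)` of `f` along `p` is a trivial covering. -/
def IsSplitBy {A B E' : C} (f : A ⟶ B) (p : E' ⟶ B) : Prop :=
  ∀ ⦃P : C⦄ (p₁ : P ⟶ A) (p₂ : P ⟶ E'), IsPullback p₁ p₂ f p → Γ.TrivCov p₂

/-- A covering (central extension): a morphism of `E` split by some monadic extension. -/
def Covering {A B : C} (f : A ⟶ B) : Prop :=
  Γ.E f ∧ ∃ (E' : C) (p : E' ⟶ B), IsMonadicExt Γ.E p ∧ Γ.IsSplitBy f p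

/-- A normal extension: a monadic extension split by itself. -/
def NormalExt {A B : C} (p : A ⟶ B) : Prop :=
  IsMonadicExt Γ.E p ∧ Γ.IsSplitBy p p

/-- (M): every morphism of `E` is a monadic extension. -/
def CondM : Prop := ∀ ⦃A B : C⦄ (p : A ⟶ B), Γ.E p → IsMonadicExt Γ.E p

/-- Admissibility of the Galois structure: the right adjoints
`H^B : (X ↓ I(B)) ⥤ (C ↓ B)` are fully faithful.  Equivalently (and this is how we
state it), for every `φ : x ⟶ I(B)` with `H(φ) ∈ E` and every pullback of `H(φ)`
along `η_B`, the corresponding component of the counit of `I^B ⊣ H^B`, i.e. the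
adjoint transpose `I(A) ⟶ x` of `t : A ⟶ H(x)`, is an isomorphism. -/
def Admissible : Prop :=
  ∀ ⦃B : C⦄ ⦃x : X⦄ (φ : x ⟶ Γ.I.obj B), Γ.E (Γ.H.map φ) →
    ∀ ⦃A : C⦄ (t : A ⟶ Γ.H.obj x) (f : A ⟶ B),
      IsPullback t f (Γ.H.map φ) (Γ.unitApp B) →
      IsIso ((Γ.adj.homEquiv A x).symm t)

/-- The `η`-naturality square at `f`, as a morphism of the arrow category. -/
def unitSq {A B : C} (f : A ⟶ B) : Arrow.mk f ⟶ Arrow.mk (Γ.H.map (Γ.I.map f)) :=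
  Arrow.homMk (u := Γ.unitApp A) (v := Γ.unitApp B)
    (by simp [unitApp])

/-- (B): `X` is a strongly `E`-Birkhoff subcategory of `C`: every `η`-naturality
square at a morphism of `E` lies in `E¹`. -/
def StronglyBirkhoff : Prop :=
  ∀ ⦃A B : C⦄ (f : A ⟶ B), Γ.E f → InE1 Γ.E (Γ.unitSq f)

/-- `I` preserves pullbacks of morphisms of `E` along split epimorphisms of `E`. -/
def PreservesSplitPullbacks : Prop :=
  ∀ ⦃D' A B C' : C⦄ (t : D' ⟶ A) (h : D' ⟶ C') (f : A ⟶ B) (g : C' ⟶ B),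
    IsPullback t h f g → Γ.E f → Γ.E g → IsSplitEpi g →
    IsPullback (Γ.I.map t) (Γ.I.map h) (Γ.I.map f) (Γ.I.map g)

end GaloisStructure

/-- The class of regular epimorphisms. -/
def regEpi (C : Type u) [Category.{v} C] : MorphismProperty C :=
  fun _ _ f => Nonempty (RegularEpi f)

/-- A pair of parallel morphisms is jointly monic. -/
def JointlyMono {R A : C} (d₀ d₁ : R ⟶ A) : Prop :=
  ∀ ⦃T : C⦄ (x y : T ⟶ R), x ≫ d₀ = y ≫ d₀ → x ≫ d₁ = y ≫ d₁ → x = y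

/-- An internal reflexive relation (given by its jointly monic pair of projections). -/
def IsReflexiveRel {R A : C} (d₀ d₁ : R ⟶ A) : Prop :=
  JointlyMono d₀ d₁ ∧ ∃ r : A ⟶ R, r ≫ d₀ = 𝟙 A ∧ r ≫ d₁ = 𝟙 A

/-- An internal equivalence relation. -/
def IsEquivRel {R A : C} (d₀ d₁ : R ⟶ A) : Prop :=
  IsReflexiveRel d₀ d₁ ∧ (∃ s : R ⟶ R, s ≫ d₀ = d₁ ∧ s ≫ d₁ = d₀) ∧
    ∀ ⦃T : C⦄ (x y : T ⟶ R), x ≫ d₁ = y ≫ d₀ →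
      ∃ t : T ⟶ R, t ≫ d₀ = x ≫ d₀ ∧ t ≫ d₁ = y ≫ d₁

/-- A Mal'tsev category: every internal reflexive relation is an equivalence relation. -/
def IsMaltsevCat (C : Type u) [Category.{v} C] : Prop :=
  ∀ ⦃A R : C⦄ (d₀ d₁ : R ⟶ A), IsReflexiveRel d₀ d₁ → IsEquivRel d₀ d₁

/-- A regular category: finite limits (assumed separately), regular epi–mono
factorisations, and pullback-stability of regular epimorphisms. -/
structure IsRegularCategory (C : Type u) [Category.{v} C] : Prop where
  factor : ∀ ⦃A B : C⦄ (f : A ⟶ B), ∃ (I' : C) (e : A ⟶ I') (m : I' ⟶ B),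
    f = e ≫ m ∧ Nonempty (RegularEpi e) ∧ Mono m
  stable : ∀ ⦃P' X' Y' Z' : C⦄ (p₁ : P' ⟶ X') (p₂ : P' ⟶ Y') (f : X' ⟶ Z') (g : Y' ⟶ Z'),
    IsPullback p₁ p₂ f g → Nonempty (RegularEpi f) → Nonempty (RegularEpi p₂)

/-- A Barr-exact category: regular, and every internal equivalence relation is
effective (i.e. a kernel pair). -/
def IsBarrExact (C : Type u) [Category.{v} C] : Prop :=
  IsRegularCategory C ∧ ∀ ⦃A R : C⦄ (d₀ d₁ : R ⟶ A), IsEquivRel d₀ d₁ →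
    ∃ (Q : C) (q : A ⟶ Q), IsPullback d₀ d₁ q q

/-- A Birkhoff subcategory: a full reflective subcategory closed under subobjects
and regular quotient objects. -/
structure IsBirkhoff {X : Type u'} [Category.{v'} X] (H : X ⥤ C) (I : C ⥤ X)
    (adj : I ⊣ H) : Prop where
  full : H.Full
  faithful : H.Faithful
  closedSub : ∀ (x : X) (A : C) (m : A ⟶ H.obj x), Mono m → ∃ y : X, Nonempty (A ≅ H.obj y)
  closedQuot : ∀ (x : X) (A : C) (e : H.obj x ⟶ A), Nonempty (RegularEpi e) →
    ∃ y : X, Nonempty (A ≅ H.obj y)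

/-- The category `Ext(C)` of `F`-morphisms. -/
def ExtCat (F : MorphismProperty C) := ObjectProperty.FullSubcategory (fun a : Arrow C => F a.hom)

instance (F : MorphismProperty C) : Category (ExtCat F) := ObjectProperty.FullSubcategory.category _

/-- The restriction of `F¹` to the category `Ext(C)`. -/
def ExtE1 (F : MorphismProperty C) : MorphismProperty (ExtCat F) :=
  fun _ _ σ => InE1 F ((ObjectProperty.ι _).map σ)

/-! To pull back the trivial covering `f` along `g`, first pull back `HI(f)` along `HI(g)`:
the resulting object `P` lies in `X`, because a reflective subcategory is closed under
whatever pullbacks of its objects exist in `C`. Since `f` is a trivial covering, `D` is then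
the pullback of `P ⟶ HI(C')` along `η_{C'}`, and admissibility says precisely that `I` inverts
the comparison `D ⟶ P`. Hence `I(D) ≅ I(P)`, which is the pullback of `I(f)` along `I(g)`
in `X`. -/

theorem _root_.CategoryTheory.Adjunction.isIso_unit_app_of_isSplitMono {D : Type u'}
    [Category.{v'} D] {L : C ⥤ D} {R : D ⥤ C} (adj : L ⊣ R) [R.Full] [R.Faithful] (A : C)
    [IsSplitMono (adj.unit.app A)] : IsIso (adj.unit.app A) := by
  let _ : Reflective R := { L := L, adj := adj }
  have : IsSplitMono ((reflectorAdjunction R).unit.app A) := ‹_›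
  exact adj.isIso_unit_app_iff_mem_essImage.mpr (mem_essImage_of_unit_isSplitMono (i := R))

theorem _root_.CategoryTheory.Adjunction.isIso_unit_app_of_isPullback {D : Type u'}
    [Category.{v'} D] {L : C ⥤ D} {R : D ⥤ C} (adj : L ⊣ R) [R.Full] [R.Faithful]
    {x y z : D} {u : x ⟶ z} {v : y ⟶ z} {P : C} {q₁ : P ⟶ R.obj x} {q₂ : P ⟶ R.obj y}
    (hP : IsPullback q₁ q₂ (R.map u) (R.map v)) : IsIso (adj.unit.app P) := by
  have w : R.map ((adj.homEquiv _ _).symm q₁) ≫ R.map u =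
      R.map ((adj.homEquiv _ _).symm q₂) ≫ R.map v := by
    rw [← R.map_comp, ← R.map_comp, ← adj.homEquiv_naturality_right_symm,
      ← adj.homEquiv_naturality_right_symm, hP.w]
  have : IsSplitMono (adj.unit.app P) := IsSplitMono.mk' ⟨hP.lift _ _ w, by
    apply hP.hom_ext <;> simp [← adj.homEquiv_unit]⟩
  exact adj.isIso_unit_app_of_isSplitMono P

theorem _root_.CategoryTheory.Adjunction.isPullback_homEquiv_symm {D : Type u'}
    [Category.{v'} D] {L : C ⥤ D} {R : D ⥤ C} (adj : L ⊣ R) [R.Full] [R.Faithful]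
    {x y z : D} {u : x ⟶ z} {v : y ⟶ z} {P : C} {q₁ : P ⟶ R.obj x} {q₂ : P ⟶ R.obj y}
    (hP : IsPullback q₁ q₂ (R.map u) (R.map v)) :
    IsPullback ((adj.homEquiv _ _).symm q₁) ((adj.homEquiv _ _).symm q₂) u v := by
  have := adj.isIso_unit_app_of_isPullback hP
  have w : (adj.homEquiv _ _).symm q₁ ≫ u = (adj.homEquiv _ _).symm q₂ ≫ v := by
    rw [← adj.homEquiv_naturality_right_symm, ← adj.homEquiv_naturality_right_symm, hP.w]
  refine IsPullback.of_map R w (hP.of_iso (asIso (adj.unit.app P)) (Iso.refl _) (Iso.refl _)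
    (Iso.refl _) ?_ ?_ (by simp) (by simp)) <;> simp [← adj.homEquiv_unit]

namespace GaloisStructure

variable {X : Type u'} [Category.{v'} X] (Γ : GaloisStructure C X)

theorem isIso_I_map_of_isPullback_unitApp (hadm : Γ.Admissible) {D P C' : C} {k : D ⟶ P}
    {h : D ⟶ C'} {q : P ⟶ Γ.H.obj (Γ.I.obj C')} (hq : Γ.E q) [IsIso (Γ.unitApp P)]
    (hk : IsPullback k h q (Γ.unitApp C')) : IsIso (Γ.I.map k) := by
  set φ := (Γ.adj.homEquiv _ _).symm q
  have hφ : Γ.unitApp P ≫ Γ.H.map φ = q := by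
    simp [φ, unitApp, ← Adjunction.homEquiv_unit]
  have hEφ : Γ.E (Γ.H.map φ) := by
    rw [← (IsIso.inv_comp_eq _).mpr hφ.symm]
    exact Γ.hE3 _ _ (Γ.hE1 _ trivial trivial inferInstance) hq
  have hshift : IsPullback (k ≫ Γ.unitApp P) h (Γ.H.map φ) (Γ.unitApp C') :=
    hk.of_iso (Iso.refl _) (asIso (Γ.unitApp P)) (Iso.refl _) (Iso.refl _)
      (by simp) (by simp) (by simp [hφ]) (by simp)
  -- the adjoint transpose of `k ≫ η_P` is `I(k)`
  have := hadm φ hEφ _ h hshift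
  rwa [unitApp, ← Adjunction.unit_naturality, ← Adjunction.homEquiv_unit,
    Equiv.symm_apply_apply] at this

end GaloisStructure

/-- If `Γ` is an admissible Galois structure, then the reflector `I`
preserves every pullback square in which one of the legs being pulled back is a
trivial covering. -/
theorem statement_0 {C : Type u} [Category.{v} C] {X : Type u'} [Category.{v'} X]
    (Γ : GaloisStructure C X) (hadm : Γ.Admissible)
    {D A B C' : C} (t : D ⟶ A) (h : D ⟶ C') (f : A ⟶ B) (g : C' ⟶ B)
    (sq : IsPullback t h f g) (hf : Γ.TrivCov f) :
    IsPullback (Γ.I.map t) (Γ.I.map h) (Γ.I.map f) (Γ.I.map g) := by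
  have := Γ.hFull
  have := Γ.hFaithful
  obtain ⟨⟨P, q₁, q₂, -, hP, hq₂⟩, -⟩ :=
    Γ.hE2 _ (Γ.hG f hf.1) (Γ.H.map (Γ.I.map g)) trivial
  have : IsIso (Γ.unitApp P) := Γ.adj.isIso_unit_app_of_isPullback hP
  have outer : IsPullback (t ≫ Γ.unitApp A) h (Γ.H.map (Γ.I.map f))
      (Γ.unitApp C' ≫ Γ.H.map (Γ.I.map g)) := by
    simpa only [GaloisStructure.unitApp, Adjunction.unit_naturality] using sq.paste_horiz hf.2
  let l : D ⟶ P := hP.lift (t ≫ Γ.unitApp A) (h ≫ Γ.unitApp C') (by simpa using outer.w)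
  have hl : IsPullback l h q₂ (Γ.unitApp C') :=
    IsPullback.of_right (by rwa [hP.lift_fst]) (hP.lift_snd _ _ _) hP
  have : IsIso (Γ.I.map l) := Γ.isIso_I_map_of_isPullback_unitApp hadm hq₂ hl
  have transpose {Y : C} {k : D ⟶ Y} {q : P ⟶ Γ.H.obj (Γ.I.obj Y)}
      (hk : l ≫ q = k ≫ Γ.unitApp Y) :
      Γ.I.map l ≫ (Γ.adj.homEquiv _ _).symm q = Γ.I.map k := by
    rw [← Adjunction.homEquiv_naturality_left_symm, hk]
    simp [GaloisStructure.unitApp, Adjunction.homEquiv_counit]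
  exact (Γ.adj.isPullback_homEquiv_symm hP).of_iso' (asIso (Γ.I.map l)) (Iso.refl _)
    (Iso.refl _) (Iso.refl _) (by simpa using transpose (hP.lift_fst _ _ _))
    (by simpa using transpose (hP.lift_snd _ _ _)) (by simp) (by simp)

end GaloisPaper
end

section
/- Let Γ be an admissible Galois structure in which every morphism of E is a monadic extension (effective E-descent morphism). Then coverings are pullback-stable: if f : A → B is a covering and g : C → B is any morphism, then the pullback of f along g is a covering of C. -/
open CategoryTheory CategoryTheory.Limits

universe v u v' u'

namespace GaloisPaper

variable {C : Type u} [Category.{v} C]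

/-!
Pull the monadic extension `p` splitting `f` back along `g`: the result `q` lies in `E`, hence is
monadic by (M), and a pullback of `h` along `q` is also a pullback of the trivial covering `p*(f)`.
So it suffices that trivial coverings are pullback-stable. Admissibility makes every
pullback of a morphism `H(φ)` along a unit `η_B` a trivial covering. If `p₂ : P ⟶ F'` is a
pullback of a trivial covering, comparing `P` with the pullback `P'` of `HI(p₂)` along `η_{F'}`
exhibits the unit square of `p₂` as a retract of the unit square of the trivial covering
`P' ⟶ F'`, and retracts of pullback squares are pullback squares.
-/

theorem _root_.CategoryTheory.IsPullback.of_retract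
    {P X Y Z P' X' : C} {fst : P ⟶ X} {snd : P ⟶ Y} {f : X ⟶ Z} {g : Y ⟶ Z}
    {fst' : P' ⟶ X'} {snd' : P' ⟶ Y} {f' : X' ⟶ Z}
    (h' : IsPullback fst' snd' f' g) (e : Retract P P') (e' : Retract X X')
    (hfst : e.i ≫ fst' = fst ≫ e'.i) (hsnd : e.i ≫ snd' = snd)
    (hfst' : e.r ≫ fst = fst' ≫ e'.r) (hsnd' : e.r ≫ snd = snd') (hf : e'.i ≫ f' = f) :
    IsPullback fst snd f g := by
  have w : fst ≫ f = snd ≫ g := by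
    rw [← hf, ← hsnd, ← Category.assoc, ← hfst, Category.assoc, h'.w, Category.assoc]
  let lift (s : PullbackCone f g) : s.pt ⟶ P :=
    h'.lift (s.fst ≫ e'.i) s.snd (by rw [Category.assoc, hf, s.condition]) ≫ e.r
  refine ⟨⟨w⟩, ⟨PullbackCone.IsLimit.mk w lift (fun s => ?_) (fun s => ?_)
    (fun s m hm₁ hm₂ => ?_)⟩⟩
  · simp [lift, hfst', e'.retract]
  · simp [lift, hsnd']
  · have hm : m ≫ e.i = h'.lift (s.fst ≫ e'.i) s.snd (by rw [Category.assoc, hf, s.condition]) :=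
      h'.hom_ext (by simp [hfst, ← hm₁]) (by simp [hsnd, hm₂])
    rw [← Category.comp_id m, ← e.retract, ← Category.assoc, hm]

namespace GaloisStructure

variable {X : Type u'} [Category.{v'} X] {Γ : GaloisStructure C X}

theorem unitApp_naturality (Γ : GaloisStructure C X) {A B : C} (f : A ⟶ B) :
    f ≫ Γ.unitApp B = Γ.unitApp A ≫ Γ.H.map (Γ.I.map f) :=
  Γ.adj.unit.naturality f

theorem Admissible.trivCov_of_isPullback_unitApp (hadm : Γ.Admissible) {B : C} {x : X}
    {φ : x ⟶ Γ.I.obj B} (hφ : Γ.E (Γ.H.map φ)) {A : C} {t : A ⟶ Γ.H.obj x} {f : A ⟶ B}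
    (hA : IsPullback t f (Γ.H.map φ) (Γ.unitApp B)) : Γ.TrivCov f := by
  let θ := (Γ.adj.homEquiv A x).symm t
  have : IsIso θ := hadm φ hφ t f hA
  have ht : t = Γ.unitApp A ≫ Γ.H.map θ := by
    simp [θ, unitApp, ← Adjunction.homEquiv_unit]
  have hIf : θ ≫ φ = Γ.I.map f := by
    rw [← Adjunction.homEquiv_naturality_right_symm, hA.w, unitApp,
      Adjunction.homEquiv_naturality_left_symm, Adjunction.homEquiv_symm_unit, Category.comp_id]
  refine ⟨(Γ.hE2 _ hφ _ trivial).2 t f trivial hA, ?_⟩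
  refine hA.of_iso (Iso.refl _) (Γ.H.mapIso (asIso θ)).symm (Iso.refl _) (Iso.refl _)
    ?_ ?_ ?_ ?_ <;> simp [ht, ← hIf]

theorem Admissible.trivCov_of_isPullback (hadm : Γ.Admissible) {Q E₀ F' P : C} {s : Q ⟶ E₀}
    (hs : Γ.TrivCov s) {w : F' ⟶ E₀} {p₁ : P ⟶ Q} {p₂ : P ⟶ F'} (hP : IsPullback p₁ p₂ s w) :
    Γ.TrivCov p₂ := by
  have hEp₂ : Γ.E p₂ := (Γ.hE2 s hs.1 w trivial).2 p₁ p₂ trivial hP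
  obtain ⟨P', t', p₂', -, hP', -⟩ := (Γ.hE2 _ (Γ.hG p₂ hEp₂) (Γ.unitApp F') trivial).1
  have hp₂' : Γ.TrivCov p₂' := hadm.trivCov_of_isPullback_unitApp (Γ.hG p₂ hEp₂) hP'
  let i : P ⟶ P' := hP'.lift (Γ.unitApp P) p₂ (Γ.unitApp_naturality p₂).symm
  let r₁ : P' ⟶ Q := hs.2.lift (t' ≫ Γ.H.map (Γ.I.map p₁)) (p₂' ≫ w) (by
    rw [Category.assoc, ← Functor.map_comp, ← Functor.map_comp, hP.w, Functor.map_comp,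
      Functor.map_comp, hP'.w_assoc, Category.assoc, Γ.unitApp_naturality w])
  let r : P' ⟶ P := hP.lift r₁ p₂' (hs.2.lift_snd _ _ _)
  have hi₂ : i ≫ p₂' = p₂ := hP'.lift_snd _ _ _
  have hr₂ : r ≫ p₂ = p₂' := hP.lift_snd _ _ _
  have hir : i ≫ r = 𝟙 P := by
    refine hP.hom_ext (hs.2.hom_ext ?_ ?_) (by simp [hr₂, hi₂])
    · simp [r, r₁, i, ← Γ.unitApp_naturality]
    · simp [r, r₁, i, hP.w]
  let e : Retract P P' := ⟨i, r, hir⟩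
  refine ⟨hEp₂, hp₂'.2.of_retract e (e.map (Γ.I ⋙ Γ.H))
    (Γ.unitApp_naturality i) hi₂ (Γ.unitApp_naturality r) hr₂ ?_⟩
  simp [e, ← Functor.map_comp, hi₂]

theorem Admissible.isSplitBy_of_isPullback (hadm : Γ.Admissible) {A B E' : C} {f : A ⟶ B}
    (hf : Γ.E f) {p : E' ⟶ B} (hsplit : Γ.IsSplitBy f p) {D C' : C} {t : D ⟶ A} {h : D ⟶ C'}
    {g : C' ⟶ B} (sq : IsPullback t h f g) {F' : C} {r : F' ⟶ E'} {q : F' ⟶ C'}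
    (hq : IsPullback r q p g) : Γ.IsSplitBy h q := by
  intro P p₁ p₂ hP
  obtain ⟨Q, s₁, s₂, -, hQ, -⟩ := (Γ.hE2 f hf p trivial).1
  have hPf : IsPullback (p₁ ≫ t) p₂ f (r ≫ p) := hq.w ▸ hP.paste_horiz sq
  have hPQ : IsPullback (hQ.lift (p₁ ≫ t) (p₂ ≫ r) (by simpa using hPf.w)) p₂ s₂ r :=
    IsPullback.of_right (by rwa [hQ.lift_fst]) (hQ.lift_snd _ _ _) hQ
  exact hadm.trivCov_of_isPullback (hsplit s₁ s₂ hQ) hPQ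

end GaloisStructure

/-- If `Γ` is admissible and every morphism of `E` is a monadic
extension, then coverings are pullback-stable. -/
theorem statement_2 {C : Type u} [Category.{v} C] {X : Type u'} [Category.{v'} X]
    (Γ : GaloisStructure C X) (hadm : Γ.Admissible) (hM : Γ.CondM)
    {D A B C' : C} (t : D ⟶ A) (h : D ⟶ C') (f : A ⟶ B) (g : C' ⟶ B)
    (sq : IsPullback t h f g) (hf : Γ.Covering f) :
    Γ.Covering h := by
  obtain ⟨hEf, E', p, hp, hsplit⟩ := hf
  obtain ⟨F', r, q, -, hq, hEq⟩ := (Γ.hE2 p hp.1 g trivial).1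
  exact ⟨(Γ.hE2 f hEf g trivial).2 t h trivial sq, F', q, hM q hEq,
    hadm.isSplitBy_of_isPullback hEf hsplit sq hq⟩

end GaloisPaper
end

section
/- Let C be a category with finite limits, and let E be a class of morphisms containing all isomorphisms, pullback-stable, closed under composition, and satisfying: if g ∘ f ∈ E then g ∈ E. Define E¹ to be the class of commutative squares (f', f) : a → b between morphisms a, b ∈ E such that f, f' ∈ E and the comparison morphism from the top-left object to the pullback of b along f lies in E. Then a commutative square of morphisms of E lies in E¹ if and only if, viewed as a morphism in the category Ext(C) of E-morphisms, all of its pullbacks along arbitrary morphisms of Ext(C) exist and are computed pointwise (i.e., preserved by the inclusion Ext(C) → Arr(C)), its pullbacks lie in the analogous class, and its horizontal arrows f, f' lie in E. -/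
open CategoryTheory CategoryTheory.Limits

universe v u v' u'

namespace GaloisPaper

variable {C : Type u} [Category.{v} C]

/-!
Pullbacks in `Arrow C` are computed pointwise whenever the pointwise pullbacks exist. If the
comparison `A' ⟶ A ×_B B'` of `σ` lies in `E`, the pointwise pullback of `σ` along
`g : c ⟶ b` is the arrow `A' ×_{B'} C' ⟶ A ×_B C`; it factors as the base change
`A' ×_{B'} C' ⟶ (A ×_B B') ×_{B'} C'` of the comparison map followed by the base change
`A ×_B C' ⟶ A ×_B C` of `c`, so it lies in `E`. Conversely, the pullback of `σ` along the
square `(𝟙, b) : 𝟙_{B'} ⟶ b` is, pointwise, exactly the comparison map of `σ`.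
-/

lemma arrow_isPullback_of_left_right {a b c d : Arrow C} {σ : a ⟶ b} {g : c ⟶ b}
    {q₁ : d ⟶ a} {q₂ : d ⟶ c} (w : q₁ ≫ σ = q₂ ≫ g)
    (hl : IsPullback q₁.left q₂.left σ.left g.left)
    (hr : IsPullback q₁.right q₂.right σ.right g.right) :
    IsPullback q₁ q₂ σ g :=
  ⟨⟨w⟩, ⟨Comma.fstSndJointlyReflectLimit
    ((PullbackCone.isLimitMapConeEquiv _ _).symm hl.isLimit)
    ((PullbackCone.isLimitMapConeEquiv _ _).symm hr.isLimit)⟩⟩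

def fromIdLeft (b : Arrow C) : Arrow.mk (𝟙 b.left) ⟶ b :=
  Arrow.homMk (𝟙 b.left) b.hom (by simp)

lemma isStableUnderBaseChange_of_condE2 {P : MorphismProperty C}
    (h : CondE2 (fun _ => True) P) : P.IsStableUnderBaseChange :=
  ⟨fun sq hg => (h _ hg _ trivial).2 _ _ trivial sq⟩

lemma isStableUnderComposition_of_condE3 {P : MorphismProperty C} (h : CondE3 P) :
    P.IsStableUnderComposition :=
  ⟨fun f g => h f g⟩

lemma containsIdentities_of_condE1 {P : MorphismProperty C} (h : CondE1 (fun _ => True) P) :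
    P.ContainsIdentities :=
  ⟨fun X => h (𝟙 X) trivial trivial inferInstance⟩

section pullbacks

variable [HasPullbacks C] {a b c : Arrow C}

attribute [local simp] pullback.lift_fst pullback.lift_snd pullback.lift_fst_assoc
  pullback.lift_snd_assoc

noncomputable def squareComparison (σ : a ⟶ b) : a.left ⟶ pullback σ.right b.hom :=
  pullback.lift a.hom σ.left (Arrow.w σ).symm

noncomputable def pointwisePullback (σ : a ⟶ b) (g : c ⟶ b) : Arrow C :=
  Arrow.mk (pullback.map σ.left g.left σ.right g.right a.hom c.hom b.hom
    (Arrow.w σ) (Arrow.w g))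

noncomputable def pointwisePullbackFst (σ : a ⟶ b) (g : c ⟶ b) : pointwisePullback σ g ⟶ a :=
  Arrow.homMk (pullback.fst σ.left g.left) (pullback.fst σ.right g.right)
    (by simp [pointwisePullback])

noncomputable def pointwisePullbackSnd (σ : a ⟶ b) (g : c ⟶ b) : pointwisePullback σ g ⟶ c :=
  Arrow.homMk (pullback.snd σ.left g.left) (pullback.snd σ.right g.right)
    (by simp [pointwisePullback])

lemma isPullback_pointwisePullback (σ : a ⟶ b) (g : c ⟶ b) :
    IsPullback (pointwisePullbackFst σ g) (pointwisePullbackSnd σ g) σ g :=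
  arrow_isPullback_of_left_right (by ext <;> exact pullback.condition)
    (IsPullback.of_hasPullback _ _) (IsPullback.of_hasPullback _ _)

lemma isPullback_squareComparison_fromIdLeft (σ : a ⟶ b) :
    IsPullback
      (Arrow.homMk (𝟙 a.left) (pullback.fst σ.right b.hom) (by simp [squareComparison]) :
        Arrow.mk (squareComparison σ) ⟶ a)
      (Arrow.homMk σ.left (pullback.snd σ.right b.hom) (by simp [squareComparison]) :
        Arrow.mk (squareComparison σ) ⟶ Arrow.mk (𝟙 b.left))
      σ (fromIdLeft b) :=
  arrow_isPullback_of_left_right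
    (by ext; exacts [(Category.id_comp _).trans (Category.comp_id _).symm, pullback.condition])
    (IsPullback.id_horiz σ.left) (IsPullback.of_hasPullback _ _)

variable (P : MorphismProperty C)

lemma inE1_iff_squareComparison [P.RespectsIso] (σ : a ⟶ b) :
    InE1 P σ ↔ P a.hom ∧ P b.hom ∧ P σ.left ∧ P σ.right ∧ P (squareComparison σ) := by
  refine ⟨?_, fun ⟨ha, hb, hl, hr, hσ⟩ => ⟨ha, hb, hl, hr, _, _, _, squareComparison σ,
    IsPullback.of_hasPullback _ _, by simp [squareComparison], by simp [squareComparison], hσ⟩⟩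
  rintro ⟨ha, hb, hl, hr, Q, p₁, p₂, l, hQ, hl₁, hl₂, hlP⟩
  have : squareComparison σ = l ≫ hQ.isoPullback.hom := by
    apply pullback.hom_ext <;> simp [squareComparison, hl₁, hl₂]
  rw [this, P.cancel_right_of_respectsIso]
  exact ⟨ha, hb, hl, hr, hlP⟩

lemma pointwisePullback_hom_mem [P.IsStableUnderBaseChange] [P.IsStableUnderComposition]
    {σ : a ⟶ b} (g : c ⟶ b) (hσ : P (squareComparison σ)) (hc : P c.hom) :
    P (pointwisePullback σ g).hom := by
  let k : pullback σ.left g.left ⟶ pullback (pullback.snd σ.right b.hom) g.left :=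
    pullback.lift (pullback.fst _ _ ≫ squareComparison σ) (pullback.snd _ _)
      (by simp [squareComparison, pullback.condition])
  let m : pullback (pullback.snd σ.right b.hom) g.left ⟶ pullback σ.right g.right :=
    pullback.lift (pullback.fst _ _ ≫ pullback.fst _ _) (pullback.snd _ _ ≫ c.hom)
      (by rw [Category.assoc, pullback.condition, ← Category.assoc, pullback.condition,
        Category.assoc, Arrow.w g, Category.assoc])
  have hk : P k := MorphismProperty.pullbackLift_fst_snd g.left
    (by simp [squareComparison]) hσ
  -- `(A ×_B B') ×_{B'} C'` is `A ×_B C'` by pasting, which is the base change of `A ×_B C` along `c`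
  have hm : IsPullback (pullback.snd _ _) m c.hom (pullback.snd σ.right g.right) := by
    refine IsPullback.of_bot ?_ (by simp [m]) (IsPullback.of_hasPullback σ.right g.right).flip
    have := (IsPullback.of_hasPullback (pullback.snd σ.right b.hom) g.left).flip.paste_vert
      (IsPullback.of_hasPullback σ.right b.hom).flip
    rw [Arrow.w g] at this
    simpa [m] using this
  have hkm : (pointwisePullback σ g).hom = k ≫ m := by
    apply pullback.hom_ext <;> simp [pointwisePullback, k, m, squareComparison]
  rw [hkm]
  exact P.comp_mem _ _ hk (P.of_isPullback hm hc)

theorem inE1_iff_isPullback_exists [P.IsStableUnderBaseChange] [P.IsStableUnderComposition]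
    [P.ContainsIdentities] {σ : a ⟶ b} (ha : P a.hom) (hb : P b.hom) :
    InE1 P σ ↔
      (P σ.left ∧ P σ.right ∧
        ∀ ⦃c : Arrow C⦄ (g : c ⟶ b), P c.hom →
          ∃ (d : Arrow C) (q₁ : d ⟶ a) (q₂ : d ⟶ c), P d.hom ∧ IsPullback q₁ q₂ σ g) := by
  rw [inE1_iff_squareComparison]
  constructor
  · rintro ⟨-, -, hl, hr, hσ⟩
    exact ⟨hl, hr, fun c g hc => ⟨_, _, _, pointwisePullback_hom_mem P g hσ hc,
      isPullback_pointwisePullback σ g⟩⟩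
  · rintro ⟨hl, hr, hpb⟩
    obtain ⟨d, q₁, q₂, hd, hdσ⟩ := hpb (fromIdLeft b) (P.id_mem _)
    have e := (isPullback_squareComparison_fromIdLeft σ).isoIsPullback _ _ hdσ
    exact ⟨ha, hb, hl, hr, (P.arrow_iso_iff e).2 hd⟩

end pullbacks

theorem statement_6_general {C : Type u} [Category.{v} C] [HasFiniteLimits C]
    (E : MorphismProperty C)
    (hE1 : CondE1 (fun _ => True) E) (hE2 : CondE2 (fun _ => True) E)
    (hE3 : CondE3 E)
    {a b : Arrow C} (ha : E a.hom) (hb : E b.hom) (σ : a ⟶ b) :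
    InE1 E σ ↔
      (E σ.left ∧ E σ.right ∧
        ∀ ⦃c : Arrow C⦄ (g : c ⟶ b), E c.hom →
          ∃ (d : Arrow C) (q₁ : d ⟶ a) (q₂ : d ⟶ c),
            E d.hom ∧ IsPullback q₁ q₂ σ g) :=
  have := isStableUnderBaseChange_of_condE2 hE2
  have := isStableUnderComposition_of_condE3 hE3
  have := containsIdentities_of_condE1 hE1
  inE1_iff_isPullback_exists E ha hb

/-- In a finitely complete category with a class `E` satisfying
(E1)-(E4), a commutative square of `E`-morphisms (a morphism `σ : a ⟶ b` of
`Ext(C)`) lies in `E¹` (i.e. its comparison to the pullback lies in `E`) if and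
only if its horizontal arrows lie in `E` and its pullbacks along arbitrary
morphisms of `Ext(C)` exist and are computed pointwise (i.e. there is a pullback
object lying in `Ext(C)` whose underlying square is a pullback in `Arr(C)`). -/
theorem statement_6 {C : Type u} [Category.{v} C] [HasFiniteLimits C]
    (E : MorphismProperty C)
    (hE1 : CondE1 (fun _ => True) E) (hE2 : CondE2 (fun _ => True) E)
    (hE3 : CondE3 E) (hE4 : CondE4 (fun _ => True) E)
    {a b : Arrow C} (ha : E a.hom) (hb : E b.hom) (σ : a ⟶ b) :
    InE1 E σ ↔
      (E σ.left ∧ E σ.right ∧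
        ∀ ⦃c : Arrow C⦄ (g : c ⟶ b), E c.hom →
          ∃ (d : Arrow C) (q₁ : d ⟶ a) (q₂ : d ⟶ c),
            E d.hom ∧ IsPullback q₁ q₂ σ g) :=
  statement_6_general E hE1 hE2 hE3 ha hb σ

end GaloisPaper
end

section
/- Let C be a regular Mal'tsev category and E its regular epimorphisms. Then every split epimorphism in Ext(C) is a double extension: given a commutative square of regular epimorphisms a : A' → A, b : B' → B, f' : A' → B', f : A → B admitting sections s' of f' and s of f compatible with a and b (a ∘ s' = s ∘ b), the comparison morphism A' → A ×_B B' is a regular epimorphism. -/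
open CategoryTheory CategoryTheory.Limits

universe v u v' u'

namespace GaloisPaper

variable {C : Type u} [Category.{v} C]

/-! Argue with generalized elements, refined along regular epimorphisms. A point `(x, y')` of
`A ×_B B'` lifts, after a cover, to `x'` with `a x' = x`. Since `a s' = s b`, we have
`x' ~_{f'} s' f' x' ~_a s' y'`, so `(x', s' y')` lies in the composite `Eq(a) ∘ Eq(f')`.
This composite is the image of a reflexive span, hence a reflexive relation, hence symmetric by
the Mal'tsev property: `(s' y', x')` lies in it too, which yields (after a further cover) a `z`
with `f' z = y'` and `a z = x`. So the comparison map is a strong epimorphism, and strong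
epimorphisms are regular in a regular category. -/

section

variable {C : Type u} [Category.{v} C]

theorem IsRegularCategory.regularEpi_of_strongEpi (hreg : IsRegularCategory C) {X Y : C}
    (f : X ⟶ Y) [StrongEpi f] : Nonempty (RegularEpi f) := by
  obtain ⟨I, e, m, rfl, ⟨he⟩, hm⟩ := hreg.factor f
  have := strongEpi_of_strongEpi e m
  have := isIso_of_mono_of_strongEpi m
  exact ⟨he.ofArrowIso (Arrow.isoMk (f := .mk e) (g := .mk (e ≫ m)) (Iso.refl _) (asIso m))⟩

theorem IsRegularCategory.strongEpi_of_isPullback (hreg : IsRegularCategory C)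
    {P X Y Z : C} {p₁ : P ⟶ X} {p₂ : P ⟶ Y} {f : X ⟶ Z} {g : Y ⟶ Z}
    (h : IsPullback p₁ p₂ f g) [StrongEpi f] : StrongEpi p₂ := by
  obtain ⟨hp⟩ := hreg.stable p₁ p₂ f g h (hreg.regularEpi_of_strongEpi f)
  have := hp.effectiveEpi
  infer_instance

theorem IsRegularCategory.exists_lift_of_strongEpi (hreg : IsRegularCategory C) {X Y T : C}
    (g : X ⟶ Y) [StrongEpi g] (y : T ⟶ Y) [HasPullback g y] :
    ∃ (T' : C) (e : T' ⟶ T) (x : T' ⟶ X), StrongEpi e ∧ x ≫ g = e ≫ y :=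
  ⟨_, pullback.snd g y, pullback.fst g y,
    hreg.strongEpi_of_isPullback (.of_hasPullback g y), pullback.condition⟩

theorem jointlyMono_of_mono {D X : C} [HasBinaryProduct X X] (m : D ⟶ X ⨯ X) [Mono m] :
    JointlyMono (m ≫ prod.fst) (m ≫ prod.snd) := fun _ x y h₀ h₁ =>
  (cancel_mono m).1 (prod.hom_ext (by simpa using h₀) (by simpa using h₁))

variable [HasPullbacks C]

attribute [local simp] pullback.lift_fst pullback.lift_snd pullback.lift_fst_assoc
  pullback.lift_snd_assoc

/-- The image of a reflexive span is a reflexive relation, hence symmetric: in generalized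
elements, the legs of `k` can be swapped inside `K` after a strong-epi cover. -/
theorem IsMaltsevCat.exists_cover_swap [HasBinaryProducts C] (hreg : IsRegularCategory C)
    (hmal : IsMaltsevCat C) {K X : C} (e₀ e₁ : K ⟶ X) (r : X ⟶ K) (hr₀ : r ≫ e₀ = 𝟙 X)
    (hr₁ : r ≫ e₁ = 𝟙 X) {T : C} (k : T ⟶ K) :
    ∃ (T' : C) (τ : T' ⟶ T) (l : T' ⟶ K),
      StrongEpi τ ∧ l ≫ e₀ = τ ≫ k ≫ e₁ ∧ l ≫ e₁ = τ ≫ k ≫ e₀ := by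
  obtain ⟨D, q, m, hqm, ⟨hq⟩, hm⟩ := hreg.factor (prod.lift e₀ e₁)
  have := hq.effectiveEpi
  have hq₀ : q ≫ m ≫ prod.fst = e₀ := by rw [← Category.assoc, ← hqm, prod.lift_fst]
  have hq₁ : q ≫ m ≫ prod.snd = e₁ := by rw [← Category.assoc, ← hqm, prod.lift_snd]
  have hD : IsReflexiveRel (m ≫ prod.fst) (m ≫ prod.snd) :=
    ⟨jointlyMono_of_mono m, r ≫ q, by simp [hq₀, hr₀], by simp [hq₁, hr₁]⟩
  obtain ⟨-, ⟨σ, hσ₀, hσ₁⟩, -⟩ := hmal _ _ hD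
  obtain ⟨T', τ, l, hτ, hl⟩ := hreg.exists_lift_of_strongEpi q (k ≫ q ≫ σ)
  refine ⟨T', τ, l, hτ, ?_, ?_⟩
  · rw [← hq₀, reassoc_of% hl]
    simp only [hσ₀, hq₁]
  · rw [← hq₁, reassoc_of% hl]
    simp only [hσ₁, hq₀]

/-- Kernel pairs permute: `Eq(q) ∘ Eq(p) ⊆ Eq(p) ∘ Eq(q)`, in generalized elements. -/
theorem IsMaltsevCat.exists_cover_of_kernelPair_comp [HasBinaryProducts C]
    (hreg : IsRegularCategory C) (hmal : IsMaltsevCat C) {A' A B' : C} (p : A' ⟶ B')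
    (q : A' ⟶ A) {T : C} (x m y : T ⟶ A') (hxm : x ≫ p = m ≫ p) (hmy : m ≫ q = y ≫ q) :
    ∃ (T' : C) (τ : T' ⟶ T) (z : T' ⟶ A'),
      StrongEpi τ ∧ z ≫ p = τ ≫ y ≫ p ∧ z ≫ q = τ ≫ x ≫ q := by
  let e₀ := pullback.fst (pullback.snd p p) (pullback.fst q q) ≫ pullback.fst p p
  let e₁ := pullback.snd (pullback.snd p p) (pullback.fst q q) ≫ pullback.snd q q
  let r : A' ⟶ pullback (pullback.snd p p) (pullback.fst q q) :=
    pullback.lift (pullback.lift (𝟙 A') (𝟙 A') rfl) (pullback.lift (𝟙 A') (𝟙 A') rfl) (by simp)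
  let k : T ⟶ pullback (pullback.snd p p) (pullback.fst q q) :=
    pullback.lift (pullback.lift x m hxm) (pullback.lift m y hmy) (by simp)
  obtain ⟨T', τ, l, hτ, hl₀, hl₁⟩ :=
    hmal.exists_cover_swap hreg e₀ e₁ r (by simp [e₀, r]) (by simp [e₁, r]) k
  refine ⟨T', τ, l ≫ pullback.snd _ _ ≫ pullback.fst q q, hτ, ?_, ?_⟩
  · have : l ≫ e₀ ≫ p = τ ≫ k ≫ e₁ ≫ p := by rw [reassoc_of% hl₀]
    simpa [e₀, e₁, k, ← pullback.condition, pullback.condition_assoc] using this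
  · have : l ≫ e₁ ≫ q = τ ≫ k ≫ e₀ ≫ q := by rw [reassoc_of% hl₁]
    simpa [e₀, e₁, k, pullback.condition] using this

end

theorem statement_8_general {C : Type u} [Category.{v} C] [HasFiniteLimits C]
    (hreg : IsRegularCategory C) (hmal : IsMaltsevCat C)
    {A' A B' B : C} (a : A' ⟶ A) (b : B' ⟶ B) (f' : A' ⟶ B') (f : A ⟶ B)
    (ha : Nonempty (RegularEpi a))
    (s' : B' ⟶ A') (s : B ⟶ A)
    (hs' : s' ≫ f' = 𝟙 B')
    (hsq : f' ≫ b = a ≫ f) (hcomp : s' ≫ a = b ≫ s) :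
    Nonempty (RegularEpi (pullback.lift a f' hsq.symm : A' ⟶ pullback f b)) := by
  have := ha.some.effectiveEpi
  obtain ⟨T₁, ρ, w, hρ, hw⟩ := hreg.exists_lift_of_strongEpi a (pullback.fst f b)
  have hmid : (w ≫ f' ≫ s') ≫ a = (ρ ≫ pullback.snd f b ≫ s') ≫ a := by
    simp only [Category.assoc, hcomp, reassoc_of% hsq, reassoc_of% hw, pullback.condition_assoc]
  obtain ⟨T₂, τ, z, hτ, hzf', hza⟩ := hmal.exists_cover_of_kernelPair_comp hreg f' a
    w (w ≫ f' ≫ s') (ρ ≫ pullback.snd f b ≫ s') (by simp [hs']) hmid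
  have hzc : z ≫ pullback.lift a f' hsq.symm = τ ≫ ρ :=
    pullback.hom_ext (by simp [pullback.lift_fst, hza, hw]) (by simp [pullback.lift_snd, hzf', hs'])
  have : StrongEpi (z ≫ pullback.lift a f' hsq.symm) := hzc ▸ strongEpi_comp τ ρ
  have := strongEpi_of_strongEpi z (pullback.lift a f' hsq.symm)
  exact hreg.regularEpi_of_strongEpi _

/-- In a regular Mal'tsev category every split epimorphism of
`Ext(C)` is a double extension: given a commutative square of regular
epimorphisms `a, b, f', f` with compatible sections `s'` of `f'` and `s` of `f`,
the comparison morphism `A' ⟶ A ×_B B'` is a regular epimorphism. -/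
theorem statement_8 {C : Type u} [Category.{v} C] [HasFiniteLimits C]
    (hreg : IsRegularCategory C) (hmal : IsMaltsevCat C)
    {A' A B' B : C} (a : A' ⟶ A) (b : B' ⟶ B) (f' : A' ⟶ B') (f : A ⟶ B)
    (ha : Nonempty (RegularEpi a)) (hb : Nonempty (RegularEpi b))
    (hf' : Nonempty (RegularEpi f')) (hf : Nonempty (RegularEpi f))
    (s' : B' ⟶ A') (s : B ⟶ A)
    (hs' : s' ≫ f' = 𝟙 B') (hs : s ≫ f = 𝟙 B)
    (hsq : f' ≫ b = a ≫ f) (hcomp : s' ≫ a = b ≫ s) :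
    Nonempty (RegularEpi (pullback.lift a f' hsq.symm : A' ⟶ pullback f b)) :=
  statement_8_general hreg hmal a b f' f ha s' s hs' hsq hcomp

end GaloisPaper
end

section
/- Let C be a Barr-exact Mal'tsev category and E the class of regular epimorphisms. Then every pushout square of regular epimorphisms in C is a double extension: the comparison morphism to the pullback is a regular epimorphism. -/
open CategoryTheory CategoryTheory.Limits

universe v u v' u'

namespace GaloisPaper

variable {C : Type u} [Category.{v} C]

/-! Let `R` and `S` be the kernel pairs of `a` and `f'`. The image `T` of `R ×_{A'} S` in
`A' × A'` is the relational composite of `R` and `S`. It contains `R` and `S`, so it is reflexive,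
hence an equivalence relation (Mal'tsev), hence the kernel pair of some `q` (exactness). Then `q`
factors through `a` and through `f'`, hence through the pushout `a ≫ f`, which makes `T` the kernel
pair of `a ≫ f`. Elementwise this gives the surjectivity of the comparison map: for `(x, y)` with
`f x = b y`, write `x = a x'` and `y = f' y'`; then `(x', y')` lies in the kernel pair of `a ≫ f`,
which is `T`, so `a x' = a z` and `f' z = f' y'` for some `z`. -/

namespace IsRegularCategory

lemma isRegularEpi_of_strongEpi (hreg : IsRegularCategory C) {X Y : C} (f : X ⟶ Y)
    [StrongEpi f] : IsRegularEpi f := by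
  obtain ⟨I, e, m, rfl, ⟨he⟩, hm⟩ := hreg.factor f
  have : IsIso m := by
    have := strongEpi_of_strongEpi e m
    exact isIso_of_mono_of_strongEpi m
  exact MorphismProperty.RespectsIso.postcomp (MorphismProperty.regularEpi C) m e ⟨⟨he⟩⟩

lemma isRegularEpi_comp (hreg : IsRegularCategory C) {X Y Z : C} (f : X ⟶ Y) (g : Y ⟶ Z)
    [IsRegularEpi f] [IsRegularEpi g] : IsRegularEpi (f ≫ g) :=
  have := strongEpi_comp f g
  hreg.isRegularEpi_of_strongEpi _

lemma isRegularEpi_of_comp (hreg : IsRegularCategory C) {X Y Z : C} (f : X ⟶ Y) (g : Y ⟶ Z)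
    [IsRegularEpi (f ≫ g)] : IsRegularEpi g :=
  have := strongEpi_of_strongEpi f g
  hreg.isRegularEpi_of_strongEpi g

lemma isRegularEpi_of_isPullback (hreg : IsRegularCategory C) {P X Y Z : C} {p₁ : P ⟶ X}
    {p₂ : P ⟶ Y} {f : X ⟶ Z} {g : Y ⟶ Z} (h : IsPullback p₁ p₂ f g) [hf : IsRegularEpi f] :
    IsRegularEpi p₂ :=
  ⟨hreg.stable p₁ p₂ f g h hf.regularEpi⟩

lemma exists_isRegularEpi_jointlyMono (hreg : IsRegularCategory C) [HasBinaryProducts C]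
    {D A : C} (x₀ x₁ : D ⟶ A) :
    ∃ (T : C) (e : D ⟶ T) (t₀ t₁ : T ⟶ A),
      IsRegularEpi e ∧ JointlyMono t₀ t₁ ∧ e ≫ t₀ = x₀ ∧ e ≫ t₁ = x₁ := by
  obtain ⟨T, e, m, hfac, ⟨he⟩, hm⟩ := hreg.factor (prod.lift x₀ x₁)
  refine ⟨T, e, m ≫ prod.fst, m ≫ prod.snd, ⟨⟨he⟩⟩, fun _ x y h₀ h₁ => ?_, ?_, ?_⟩
  · simp only [← Category.assoc] at h₀ h₁
    exact (cancel_mono m).1 (prod.hom_ext h₀ h₁)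
  · rw [← Category.assoc, ← hfac, prod.lift_fst]
  · rw [← Category.assoc, ← hfac, prod.lift_snd]

/-- `T` is `X' ×_Z Y'` and the map is `a ×_Z f' : X' ×_Z Y' ⟶ X ×_Z Y`. -/
lemma isRegularEpi_lift_of_isPullback (hreg : IsRegularCategory C) [HasPullbacks C]
    {T X' Y' X Y Z : C} {t₀ : T ⟶ X'} {t₁ : T ⟶ Y'} {a : X' ⟶ X} {f' : Y' ⟶ Y} {f : X ⟶ Z}
    {b : Y ⟶ Z} (hT : IsPullback t₀ t₁ (a ≫ f) (f' ≫ b)) [IsRegularEpi a] [IsRegularEpi f'] :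
    IsRegularEpi (pullback.lift (t₀ ≫ a) (t₁ ≫ f') (by simpa using hT.w) : T ⟶ pullback f b) := by
  let v : pullback (pullback.snd f b) f' ⟶ pullback f b := pullback.fst _ _
  let u : T ⟶ pullback (pullback.snd f b) f' :=
    pullback.lift (pullback.lift (t₀ ≫ a) (t₁ ≫ f') (by simpa using hT.w)) t₁
      (pullback.lift_snd _ _ _)
  have hv : IsPullback v (pullback.snd _ _) (pullback.snd f b) f' :=
    IsPullback.of_hasPullback _ _
  have hu : IsPullback t₀ u a (v ≫ pullback.fst f b) :=
    IsPullback.of_bot (by simpa only [u, pullback.lift_snd] using hT)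
      (by simp only [u, v, pullback.lift_fst_assoc, pullback.lift_fst])
      (hv.paste_horiz (IsPullback.of_hasPullback f b))
  have := hreg.isRegularEpi_of_isPullback hu
  have := hreg.isRegularEpi_of_isPullback hv.flip
  rw [← pullback.lift_fst (f := pullback.snd f b) (g := f') _ t₁ (pullback.lift_snd _ _ _)]
  exact hreg.isRegularEpi_comp u v

end IsRegularCategory

lemma exists_relComp_isKernelPair_of_isPushout [HasBinaryProducts C] (hex : IsBarrExact C)
    (hmal : IsMaltsevCat C) {A' A B' B : C} {a : A' ⟶ A} {f' : A' ⟶ B'} {f : A ⟶ B}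
    {b : B' ⟶ B} (hpo : IsPushout a f' f b) [IsRegularEpi a] [IsRegularEpi f']
    {R S D : C} {r₀ r₁ : R ⟶ A'} {s₀ s₁ : S ⟶ A'} {dr : D ⟶ R} {ds : D ⟶ S}
    (hR : IsKernelPair a r₀ r₁) (hS : IsKernelPair f' s₀ s₁) (hD : IsPullback dr ds r₁ s₀) :
    ∃ (T : C) (e : D ⟶ T) (t₀ t₁ : T ⟶ A'), IsRegularEpi e ∧
      e ≫ t₀ = dr ≫ r₀ ∧ e ≫ t₁ = ds ≫ s₁ ∧ IsKernelPair (a ≫ f) t₀ t₁ := by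
  obtain ⟨T, e, t₀, t₁, he, hjm, he₀, he₁⟩ :=
    hex.1.exists_isRegularEpi_jointlyMono (dr ≫ r₀) (ds ≫ s₁)
  let ρR : A' ⟶ R := hR.lift (𝟙 _) (𝟙 _) rfl
  let ρS : A' ⟶ S := hS.lift (𝟙 _) (𝟙 _) rfl
  obtain ⟨iR, hiR₀, hiR₁⟩ : ∃ i : R ⟶ T, i ≫ t₀ = r₀ ∧ i ≫ t₁ = r₁ :=
    ⟨hD.lift (𝟙 R) (r₁ ≫ ρS) (by simp [ρS]) ≫ e, by simp [he₀], by simp [he₁, ρS]⟩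
  obtain ⟨iS, hiS₀, hiS₁⟩ : ∃ i : S ⟶ T, i ≫ t₀ = s₀ ∧ i ≫ t₁ = s₁ :=
    ⟨hD.lift (s₀ ≫ ρR) (𝟙 S) (by simp [ρR]) ≫ e, by simp [he₀, ρR], by simp [he₁]⟩
  have hrefl : IsReflexiveRel t₀ t₁ :=
    ⟨hjm, ρR ≫ iR, by simp [hiR₀, ρR], by simp [hiR₁, ρR]⟩
  obtain ⟨Q, q, hq⟩ := hex.2 t₀ t₁ (hmal t₀ t₁ hrefl)
  obtain ⟨g, hg⟩ := IsRegularEpi.exists_of_isKernelPair a hR q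
    (by rw [← hiR₀, ← hiR₁, Category.assoc, Category.assoc, hq.w])
  obtain ⟨h, hh⟩ := IsRegularEpi.exists_of_isKernelPair f' hS q
    (by rw [← hiS₀, ← hiS₁, Category.assoc, Category.assoc, hq.w])
  have hcoeq : t₀ ≫ a ≫ f = t₁ ≫ a ≫ f := by
    have : Epi e := he.regularEpi.some.epi
    rw [← cancel_epi e, reassoc_of% he₀, reassoc_of% he₁, reassoc_of% hR.w, hpo.w,
      reassoc_of% hD.w, reassoc_of% hS.w]
  refine ⟨T, e, t₀, t₁, he, he₀, he₁,
    IsKernelPair.cancel_right (f₂ := hpo.desc g h ?_) hcoeq ?_⟩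
  · rw [hg, hh]
  · convert hq using 1
    rw [Category.assoc, hpo.inl_desc, hg]

theorem statement_9_general {C : Type u} [Category.{v} C] [HasFiniteLimits C]
    (hex : IsBarrExact C) (hmal : IsMaltsevCat C)
    {A' A B' B : C} (a : A' ⟶ A) (b : B' ⟶ B) (f' : A' ⟶ B') (f : A ⟶ B)
    (ha : Nonempty (RegularEpi a))
    (hf' : Nonempty (RegularEpi f'))
    (hsq : a ≫ f = f' ≫ b) (hpo : IsPushout a f' f b) :
    Nonempty (RegularEpi (pullback.lift a f' hsq : A' ⟶ pullback f b)) := by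
  have : IsRegularEpi a := ⟨ha⟩
  have : IsRegularEpi f' := ⟨hf'⟩
  obtain ⟨T, e, t₀, t₁, he, he₀, he₁, hT⟩ :=
    exists_relComp_isKernelPair_of_isPushout hex hmal hpo (IsKernelPair.of_hasPullback a)
      (IsKernelPair.of_hasPullback f')
      (IsPullback.of_hasPullback (pullback.snd a a) (pullback.fst f' f'))
  have hT' : IsPullback t₀ t₁ (a ≫ f) (f' ≫ b) := hsq ▸ hT
  let z : pullback (pullback.snd a a) (pullback.fst f' f') ⟶ A' :=
    pullback.fst _ _ ≫ pullback.snd a a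
  have hfac : e ≫ pullback.lift (t₀ ≫ a) (t₁ ≫ f') (by simpa using hT'.w) =
      z ≫ pullback.lift a f' hsq := by
    ext
    · simp only [z, Category.assoc, pullback.lift_fst, reassoc_of% he₀]
      rw [pullback.condition]
    · simp only [z, Category.assoc, pullback.lift_snd, reassoc_of% he₁, ← pullback.condition,
        pullback.condition_assoc]
  have := hex.1.isRegularEpi_lift_of_isPullback hT'
  have : IsRegularEpi (z ≫ pullback.lift a f' hsq) := hfac ▸ hex.1.isRegularEpi_comp _ _
  exact (hex.1.isRegularEpi_of_comp z _).regularEpi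

/-- In a Barr-exact Mal'tsev category every pushout square of regular
epimorphisms is a double extension: the comparison morphism to the pullback is a
regular epimorphism. -/
theorem statement_9 {C : Type u} [Category.{v} C] [HasFiniteLimits C]
    (hex : IsBarrExact C) (hmal : IsMaltsevCat C)
    {A' A B' B : C} (a : A' ⟶ A) (b : B' ⟶ B) (f' : A' ⟶ B') (f : A ⟶ B)
    (ha : Nonempty (RegularEpi a)) (hb : Nonempty (RegularEpi b))
    (hf' : Nonempty (RegularEpi f')) (hf : Nonempty (RegularEpi f))
    (hsq : a ≫ f = f' ≫ b) (hpo : IsPushout a f' f b) :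
    Nonempty (RegularEpi (pullback.lift a f' hsq : A' ⟶ pullback f b)) :=
  statement_9_general hex hmal a b f' f ha hf' hsq hpo

end GaloisPaper
end

section
/- Let Γ = (C, X, H, I, η, E) be a Galois structure satisfying: (E4) if g ∘ f ∈ E then g ∈ E; (E5) every split epimorphism in Ext(C) lies in E¹; (M) every morphism in E is a monadic extension; and (B) X is strongly E-Birkhoff. Then Γ is admissible: every functor H^B : (X ↓ I(B)) → (C ↓ B), given by pulling back along η_B, is fully faithful. -/
open CategoryTheory CategoryTheory.Limits

universe v u v' u'

namespace GaloisPaper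

variable {C : Type u} [Category.{v} C]

/-!
Let `A` be the pullback of `H(φ)` along `η_B` and `σ : I(A) ⟶ x` the transpose of `A ⟶ H(x)`.
Then `H(σ)` is a morphism from `HI(f)` to `H(φ)` over `HI(B)`, and pulling it back along `η_B`
gives a morphism `s : P ⟶ A`, where `P` is the pullback of `HI(f)` along `η_B`. By (B) the
comparison `l : A ⟶ P` of the `η`-square at `f` lies in `E`, so by (M) it is a monadic extension.
Now `l` is a section of `s`, and a monadic extension can be cancelled on the left, so `s` is an
isomorphism. Since `η_B*` is monadic it reflects isomorphisms,
hence `H(σ)` and then `σ` are isomorphisms.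
-/

section MonadicRightAdjoint

variable {D : Type*} [Category D] {D' : Type*} [Category D'] (G : D ⥤ D') [MonadicRightAdjoint G]

lemma faithful_of_monadicRightAdjoint : G.Faithful :=
  Functor.Faithful.of_iso (Monad.comparisonForget (monadicAdjunction G))

lemma reflectsIsomorphisms_of_monadicRightAdjoint : G.ReflectsIsomorphisms :=
  reflectsIsomorphisms_of_iso (Monad.comparisonForget (monadicAdjunction G))

end MonadicRightAdjoint

namespace EOver

variable {F : MorphismProperty C} {B : C} {X Y Z : EOver F B}

def homMk (f : X.obj.left ⟶ Y.obj.left) (w : f ≫ Y.obj.hom = X.obj.hom) : X ⟶ Y :=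
  ObjectProperty.homMk (Over.homMk f w)

@[simp]
lemma comp_left (u : X ⟶ Y) (v : Y ⟶ Z) : (u ≫ v).hom.left = u.hom.left ≫ v.hom.left := rfl

lemma w (u : X ⟶ Y) : u.hom.left ≫ Y.obj.hom = X.obj.hom := Over.w u.hom

lemma hom_ext {u v : X ⟶ Y} (h : u.hom.left = v.hom.left) : u = v :=
  ObjectProperty.hom_ext _ (Over.OverMorphism.ext h)

lemma isIso_homMk_iff (f : X.obj.left ⟶ Y.obj.left) (w : f ≫ Y.obj.hom = X.obj.hom) :
    IsIso (homMk f w) ↔ IsIso f := by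
  refine ⟨fun _ => ⟨(inv (homMk f w)).hom.left, ?_, ?_⟩, fun _ => ⟨homMk (inv f) ?_, ?_, ?_⟩⟩
  · exact congrArg (fun u => u.hom.left) (IsIso.hom_inv_id (homMk f w))
  · exact congrArg (fun u => u.hom.left) (IsIso.inv_hom_id (homMk f w))
  · rw [IsIso.inv_comp_eq, w]
  · exact hom_ext (IsIso.hom_inv_id f)
  · exact hom_ext (IsIso.inv_hom_id f)

end EOver

namespace IsMonadicExt

variable {F : MorphismProperty C} {A P : C} {l : A ⟶ P}

lemma section_ext (hl : IsMonadicExt F l) (hid : F (𝟙 P)) {W : C} {w : W ⟶ P} (hw : F w)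
    {x y : P ⟶ W} (hx : x ≫ w = 𝟙 P) (hy : y ≫ w = 𝟙 P) (h : l ≫ x = l ≫ y) : x = y := by
  obtain ⟨-, hcomp, G, adj, ⟨mon⟩⟩ := hl
  have := faithful_of_monadicRightAdjoint G
  let T : EOver F P := ⟨Over.mk (𝟙 P), hid⟩
  let Wo : EOver F P := ⟨Over.mk w, hw⟩
  let x' : T ⟶ Wo := EOver.homMk x hx
  let y' : T ⟶ Wo := EOver.homMk y hy
  -- the counit at `𝟙 P` is epic because `l*` is faithful, and its underlying map factors through `l`
  suffices adj.counit.app T ≫ x' = adj.counit.app T ≫ y' from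
    congrArg (fun u => u.hom.left) ((cancel_epi _).1 this)
  have hε : (adj.counit.app T).hom.left = (G.obj T).obj.hom ≫ l :=
    (Category.comp_id _).symm.trans (EOver.w (adj.counit.app T))
  apply EOver.hom_ext
  simp only [EOver.comp_left, hε]
  erw [Category.assoc, Category.assoc, h]
  rfl

lemma left_cancellation (hE1 : CondE1 (fun _ => True) F) (hE2 : CondE2 (fun _ => True) F)
    (hl : IsMonadicExt F l) {Z B' : C} {z : Z ⟶ B'} (hz : F z) {x y : P ⟶ Z}
    (hxy : x ≫ z = y ≫ z) (h : l ≫ x = l ≫ y) : x = y := by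
  -- `x` and `y` become sections of the pullback `q₂` of `z` along `x ≫ z`
  obtain ⟨W, q₁, q₂, -, hq, hq₂⟩ := (hE2 z hz (x ≫ z) trivial).1
  have hx : x ≫ z = 𝟙 P ≫ x ≫ z := (Category.id_comp _).symm
  have hy : y ≫ z = 𝟙 P ≫ x ≫ z := by rw [Category.id_comp, hxy]
  have hsec := hl.section_ext (hE1 (𝟙 P) trivial trivial inferInstance) hq₂
    (hq.lift_snd x (𝟙 P) hx) (hq.lift_snd y (𝟙 P) hy)
    (hq.hom_ext (by simp [h]) (by simp))
  simpa using congrArg (· ≫ q₁) hsec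

end IsMonadicExt

section PullbackAlong

variable {F : MorphismProperty C} {B B' : C} {η : B ⟶ B'}
  {hcomp : ∀ ⦃Z : C⦄ (f : Z ⟶ B), F f → F (f ≫ η)}

lemma bijective_eMap_map_comp_of_isPullback {A : EOver F B} {W : EOver F B'}
    (τ : (eMap F η hcomp).obj A ⟶ W) (hτ : IsPullback τ.hom.left A.obj.hom W.obj.hom η)
    (T : EOver F B) : Function.Bijective fun k : T ⟶ A => (eMap F η hcomp).map k ≫ τ := by
  refine ⟨fun k k' hk => EOver.hom_ext (hτ.hom_ext ?_ ?_), fun g => ?_⟩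
  · exact congrArg (fun u => u.hom.left) hk
  · exact (EOver.w k).trans (EOver.w k').symm
  · have hg : g.hom.left ≫ W.obj.hom = T.obj.hom ≫ η := EOver.w g
    exact ⟨EOver.homMk (hτ.lift _ _ hg) (hτ.lift_snd _ _ hg),
      EOver.hom_ext (hτ.lift_fst _ _ hg)⟩

/-- The right adjoint of `Σ_η` computes pullbacks along `η`. -/
lemma isIso_homEquiv_of_isPullback {G : EOver F B' ⥤ EOver F B} (adj : eMap F η hcomp ⊣ G)
    {A : EOver F B} {W : EOver F B'}
    (τ : (eMap F η hcomp).obj A ⟶ W) (hτ : IsPullback τ.hom.left A.obj.hom W.obj.hom η) :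
    IsIso (adj.homEquiv A W τ) := by
  refine isIso_of_yoneda_map_bijective _ fun T => ?_
  have : (fun k : T ⟶ A => k ≫ adj.homEquiv A W τ) =
      adj.homEquiv T W ∘ fun k => (eMap F η hcomp).map k ≫ τ := by
    funext k
    exact (adj.homEquiv_naturality_left k τ).symm
  rw [this]
  exact (adj.homEquiv T W).bijective.comp (bijective_eMap_map_comp_of_isPullback τ hτ T)

end PullbackAlong

/-- `η*` reflects isomorphisms, phrased through arbitrary pullbacks along `η`. -/
lemma IsMonadicExt.isIso_of_isPullback_of_isIso {F : MorphismProperty C} {B B' : C} {η : B ⟶ B'}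
    (hη : IsMonadicExt F η) {W W' : C} {w : W ⟶ B'} {w' : W' ⟶ B'} (hw : F w) (hw' : F w')
    {m : W' ⟶ W} (hm : m ≫ w = w') {A A' : C} {a : A ⟶ B} {a' : A' ⟶ B} (ha : F a) (ha' : F a')
    {t : A ⟶ W} {t' : A' ⟶ W'} (ht : IsPullback t a w η) (ht' : IsPullback t' a' w' η)
    {s : A' ⟶ A} [IsIso s] (hsa : s ≫ a = a') (hst : s ≫ t = t' ≫ m) : IsIso m := by
  obtain ⟨-, hcomp, G, adj, ⟨mon⟩⟩ := hη
  have := reflectsIsomorphisms_of_monadicRightAdjoint G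
  let oA : EOver F B := ⟨Over.mk a, ha⟩
  let oA' : EOver F B := ⟨Over.mk a', ha'⟩
  let oW : EOver F B' := ⟨Over.mk w, hw⟩
  let oW' : EOver F B' := ⟨Over.mk w', hw'⟩
  let τ : (eMap F η hcomp).obj oA ⟶ oW := EOver.homMk t ht.w
  let τ' : (eMap F η hcomp).obj oA' ⟶ oW' := EOver.homMk t' ht'.w
  let mOver : oW' ⟶ oW := EOver.homMk m hm
  let sOver : oA' ⟶ oA := EOver.homMk s hsa
  have : IsIso sOver := (EOver.isIso_homMk_iff (X := oA') (Y := oA) s hsa).2 ‹_›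
  have := isIso_homEquiv_of_isPullback adj τ ht
  have := isIso_homEquiv_of_isPullback adj τ' ht'
  have hnat : adj.homEquiv oA' oW' τ' ≫ G.map mOver = sOver ≫ adj.homEquiv oA oW τ := by
    rw [← adj.homEquiv_naturality_right, ← adj.homEquiv_naturality_left]
    exact congrArg _ (EOver.hom_ext hst.symm)
  have : IsIso (G.map mOver) := by
    rw [(Iso.eq_inv_comp (asIso (adj.homEquiv oA' oW' τ'))).2 hnat]
    infer_instance
  exact (EOver.isIso_homMk_iff (X := oW') (Y := oW) m hm).1 (isIso_of_reflects_iso mOver G)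

namespace GaloisStructure

variable {X : Type u'} [Category.{v'} X] (Γ : GaloisStructure C X)

lemma unitApp_comp_map_homEquiv_symm {A : C} {x : X} (t : A ⟶ Γ.H.obj x) :
    Γ.unitApp A ≫ Γ.H.map ((Γ.adj.homEquiv A x).symm t) = t := by
  rw [unitApp, ← Adjunction.homEquiv_unit, Equiv.apply_symm_apply]

lemma map_homEquiv_symm_comp_map {A B : C} {x : X} {t : A ⟶ Γ.H.obj x} {f : A ⟶ B}
    {φ : x ⟶ Γ.I.obj B} (h : t ≫ Γ.H.map φ = f ≫ Γ.unitApp B) :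
    Γ.H.map ((Γ.adj.homEquiv A x).symm t) ≫ Γ.H.map φ = Γ.H.map (Γ.I.map f) := by
  rw [← Γ.H.map_comp, ← Adjunction.homEquiv_naturality_right_symm, h, unitApp,
    Adjunction.homEquiv_naturality_left_symm, Adjunction.homEquiv_symm_unit, Category.comp_id]

lemma StronglyBirkhoff.mem_unitApp {Γ : GaloisStructure C X} (hB : Γ.StronglyBirkhoff) (B : C) :
    Γ.E (Γ.unitApp B) :=
  (hB (𝟙 B) (Γ.hE1 (𝟙 B) trivial trivial inferInstance)).2.2.2.1

lemma StronglyBirkhoff.exists_isPullback {Γ : GaloisStructure C X} (hB : Γ.StronglyBirkhoff)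
    {A B : C} {f : A ⟶ B} (hf : Γ.E f) :
    Γ.E (Γ.H.map (Γ.I.map f)) ∧ ∃ (P : C) (p₁ : P ⟶ B) (p₂ : P ⟶ Γ.H.obj (Γ.I.obj A)) (l : A ⟶ P),
      IsPullback p₁ p₂ (Γ.unitApp B) (Γ.H.map (Γ.I.map f)) ∧ l ≫ p₁ = f ∧
        l ≫ p₂ = Γ.unitApp A ∧ Γ.E l :=
  ⟨(hB f hf).2.1, (hB f hf).2.2.2.2⟩

end GaloisStructure

theorem statement_11_general {C : Type u} [Category.{v} C] {X : Type u'} [Category.{v'} X]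
    (Γ : GaloisStructure C X)
    (hM : Γ.CondM) (hB : Γ.StronglyBirkhoff) :
    Γ.Admissible := by
  intro B x φ hφ A t f hpb
  have hf : Γ.E f := (Γ.hE2 _ hφ (Γ.unitApp B) trivial).2 t f trivial hpb
  obtain ⟨hIf, P, p₁, p₂, l, hP, hlp₁, hlp₂, hl⟩ := hB.exists_isPullback hf
  set σ := (Γ.adj.homEquiv A x).symm t
  have ht : Γ.unitApp A ≫ Γ.H.map σ = t := Γ.unitApp_comp_map_homEquiv_symm t
  have hσ : Γ.H.map σ ≫ Γ.H.map φ = Γ.H.map (Γ.I.map f) := Γ.map_homEquiv_symm_comp_map hpb.w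
  obtain ⟨s, hst, hsf⟩ : ∃ s : P ⟶ A, s ≫ t = p₂ ≫ Γ.H.map σ ∧ s ≫ f = p₁ :=
    ⟨hpb.lift _ _ (by rw [Category.assoc, hσ, hP.w]), hpb.lift_fst .., hpb.lift_snd ..⟩
  have hls : l ≫ s = 𝟙 A := hpb.hom_ext
    (by rw [Category.assoc, hst, reassoc_of% hlp₂, ht, Category.id_comp])
    (by rw [Category.assoc, hsf, hlp₁, Category.id_comp])
  have hp₁ : Γ.E p₁ := (Γ.hE2 _ hIf (Γ.unitApp B) trivial).2 p₂ p₁ trivial hP.flip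
  have hsl : s ≫ l = 𝟙 P := (hM l hl).left_cancellation Γ.hE1 Γ.hE2 hp₁
    (by rw [Category.assoc, hlp₁, hsf, Category.id_comp]) (by rw [reassoc_of% hls, Category.comp_id])
  have : IsIso s := ⟨l, hsl, hls⟩
  have : IsIso (Γ.H.map σ) := (hM _ (hB.mem_unitApp B)).isIso_of_isPullback_of_isIso hφ hIf hσ
    hf hp₁ hpb hP.flip hsf hst
  have := Γ.hFull
  have := Γ.hFaithful
  exact isIso_of_reflects_iso σ Γ.H

/-- A Galois structure satisfying (E4), (E5), (M) and (B) is
admissible. -/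
theorem statement_11 {C : Type u} [Category.{v} C] {X : Type u'} [Category.{v'} X]
    (Γ : GaloisStructure C X)
    (hE4 : CondE4 (fun _ => True) Γ.E) (hE5 : CondE5 Γ.E)
    (hM : Γ.CondM) (hB : Γ.StronglyBirkhoff) :
    Γ.Admissible :=
  statement_11_general Γ hM hB

end GaloisPaper
end
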